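/- Let H be a minimal solution of a ground ILP task for distinct examples (B, L, ⟨E_1, …, E_n⟩), and suppose that for every i the program B ∪ O_i ∪ H is stratified, with unique stable model M_i. Then every rule r ∈ H is active in at least one of the contexts, i.e., for every r ∈ H there exists i ∈ {1, …, n} with pos(r) ⊆ M_i, neg(r) ∩ M_i = ∅, and head(r) ∈ M_i. -/

import Mathlib

/-!
If a rule `r ∈ H` were inactive in every `M i`, its body would fail in every `M i`, so each
`M i` would stay stable after deleting `r`. Subprograms of stratified programs are
stratified, and stratified programs have at most one stable model, so each `M i` would be
the unique stable model of `B ∪ O_i ∪ (H \ {r})` as well. Entailment from a program with a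
unique stable model is membership in it, hence `H \ {r}` would cover every example, a
solution strictly below `H`.
-/

namespace ASP

/-- A ground normal rule: a head atom, a finite set of positive body atoms,
and a finite set of negated body atoms. -/
structure Rule (α : Type) where
  head : α
  pos : Finset α
  neg : Finset α
deriving DecidableEq

variable {α : Type}

/-- An interpretation `M` satisfies a rule `r` if `head r ∈ M` whenever
`pos r ⊆ M` and `neg r ∩ M = ∅`. -/
def ruleSat (M : Set α) (r : Rule α) : Prop :=
  ((↑r.pos : Set α) ⊆ M ∧ ∀ a ∈ r.neg, a ∉ M) → r.head ∈ M

/-- `M` is a model of a program if it satisfies every rule. -/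
def isModel (M : Set α) (P : Set (Rule α)) : Prop :=
  ∀ r ∈ P, ruleSat M r

/-- A definite program has no negated body atoms. -/
def isDefinite (P : Set (Rule α)) : Prop :=
  ∀ r ∈ P, r.neg = ∅

/-- The reduct `P^M`: the definite program
`{(head r, pos r, ∅) : r ∈ P, neg r ∩ M = ∅}`. -/
def reduct (P : Set (Rule α)) (M : Set α) : Set (Rule α) :=
  {r' | ∃ r ∈ P, (∀ a ∈ r.neg, a ∉ M) ∧ r' = ⟨r.head, r.pos, ∅⟩}

/-- `M` is the least model of `P`: a model contained in every model of `P`. -/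
def isLeastModel (M : Set α) (P : Set (Rule α)) : Prop :=
  isModel M P ∧ ∀ M', isModel M' P → M ⊆ M'

/-- `M` is a stable model (answer set) of `P` if `M` is the least model of
the reduct `P^M`. -/
def isStable (M : Set α) (P : Set (Rule α)) : Prop :=
  isLeastModel M (reduct P M)

/-- A program is stratified if there is a stratification function `s` on atoms. -/
def isStratified (P : Set (Rule α)) : Prop :=
  ∃ s : α → ℕ, ∀ r ∈ P,
    (∀ a ∈ r.pos, s a ≤ s r.head) ∧ (∀ a ∈ r.neg, s a < s r.head)

/-- `P ⊢ a` : atom `a` belongs to every stable model of `P`. -/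
def entails (P : Set (Rule α)) (a : α) : Prop :=
  ∀ M, isStable M P → a ∈ M

/-- `H1 ≤ H2` for finite ground programs: there is an injective map `f` from the
rules of `H1` to the rules of `H2` preserving heads and (weakly) enlarging bodies. -/
def progLE (H1 H2 : Finset (Rule α)) : Prop :=
  ∃ f : Rule α → Rule α, Set.InjOn f ↑H1 ∧
    ∀ r ∈ H1, f r ∈ H2 ∧ (f r).head = r.head ∧ r.pos ⊆ (f r).pos ∧ r.neg ⊆ (f r).neg

/-- `H1 < H2` iff `H1 ≤ H2` and `H1 ≠ H2`. -/
def progLT (H1 H2 : Finset (Rule α)) : Prop :=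
  progLE H1 H2 ∧ H1 ≠ H2

/-- A context-dependent example: an observation program `obs` together with finite
sets of positive and negative example atoms. -/
structure ILPExample (α : Type) where
  obs : Set (Rule α)
  epos : Finset α
  eneg : Finset α

/-- `H` covers example `E` (relative to background `B`): every positive example atom
belongs to every stable model of `B ∪ O ∪ H`, and no negative example atom does. -/
def covers (B : Set (Rule α)) (H : Finset (Rule α)) (E : ILPExample α) : Prop :=
  (∀ a ∈ E.epos, entails (B ∪ E.obs ∪ ↑H) a) ∧
  (∀ a ∈ E.eneg, ¬ entails (B ∪ E.obs ∪ ↑H) a)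

/-- `H` is a solution of the ILP task for distinct examples `(B, L, Es)`. -/
def isSolution (B L : Set (Rule α)) (Es : List (ILPExample α))
    (H : Finset (Rule α)) : Prop :=
  (↑H : Set (Rule α)) ⊆ L ∧ ∀ E ∈ Es, covers B H E

/-- A solution `H` is minimal if no solution `H'` satisfies `H' < H`. -/
def isMinimalSolution (B L : Set (Rule α)) (Es : List (ILPExample α))
    (H : Finset (Rule α)) : Prop :=
  isSolution B L Es H ∧ ¬∃ H', isSolution B L Es H' ∧ progLT H' H

def ruleActive (M : Set α) (r : Rule α) : Prop :=
  (↑r.pos : Set α) ⊆ M ∧ (∀ a ∈ r.neg, a ∉ M) ∧ r.head ∈ M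

lemma isStable.head_mem {M : Set α} {P : Set (Rule α)} (hM : isStable M P) {r : Rule α}
    (hr : r ∈ P) (hpos : (↑r.pos : Set α) ⊆ M) (hneg : ∀ a ∈ r.neg, a ∉ M) : r.head ∈ M :=
  hM.1 ⟨r.head, r.pos, ∅⟩ ⟨r, hr, hneg, rfl⟩ ⟨hpos, by simp⟩

lemma isStratified.mono {P Q : Set (Rule α)} (hPQ : P ⊆ Q) (hQ : isStratified Q) :
    isStratified P := by
  obtain ⟨s, hs⟩ := hQ
  exact ⟨s, fun r hr => hs r (hPQ hr)⟩

/-- `M` together with all atoms above level `n` is a model of the reduct by `N`. -/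
lemma mem_of_mem_of_agree_below {P : Set (Rule α)} {s : α → ℕ}
    (hs : ∀ r ∈ P, (∀ a ∈ r.pos, s a ≤ s r.head) ∧ (∀ a ∈ r.neg, s a < s r.head))
    {M N : Set α} (hM : isStable M P) (hN : isStable N P) {n : ℕ}
    (hagree : ∀ b, s b < n → (b ∈ M ↔ b ∈ N)) {a : α} (ha : a ∈ N) (han : s a = n) :
    a ∈ M := by
  have hmodel : isModel (M ∪ {b | n < s b}) (reduct P N) := by
    rintro _ ⟨r, hrP, hrneg, rfl⟩ ⟨hpos, -⟩
    by_cases hh : n < s r.head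
    · exact Or.inr hh
    rw [not_lt] at hh
    refine Or.inl (hM.head_mem (r := r) hrP (fun b hb => ?_) fun b hb hbM => ?_)
    · exact (hpos hb).resolve_right fun hlt => hlt.not_ge (((hs r hrP).1 b hb).trans hh)
    · exact hrneg b hb ((hagree b (((hs r hrP).2 b hb).trans_le hh)).mp hbM)
  exact (hN.2 _ hmodel ha).resolve_right (by simp [han])

lemma isStable.eq_of_isStratified {P : Set (Rule α)} (hP : isStratified P) {M N : Set α}
    (hM : isStable M P) (hN : isStable N P) : M = N := by
  obtain ⟨s, hs⟩ := hP
  ext a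
  induction h : s a using Nat.strong_induction_on generalizing a with
  | _ n ih =>
    have hagree : ∀ b, s b < n → (b ∈ M ↔ b ∈ N) := fun b hb => ih (s b) hb b rfl
    exact ⟨fun haM => mem_of_mem_of_agree_below hs hN hM (fun b hb => (hagree b hb).symm) haM h,
      fun haN => mem_of_mem_of_agree_below hs hM hN hagree haN h⟩

lemma entails_iff_of_isStratified {P : Set (Rule α)} (hP : isStratified P) {M : Set α}
    (hM : isStable M P) {a : α} : entails P a ↔ a ∈ M :=
  ⟨fun h => h M hM, fun ha _ hN => hN.eq_of_isStratified hP hM ▸ ha⟩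

lemma covers_iff_of_isStratified {B : Set (Rule α)} {H : Finset (Rule α)} {E : ILPExample α}
    (hP : isStratified (B ∪ E.obs ∪ ↑H)) {M : Set α} (hM : isStable M (B ∪ E.obs ∪ ↑H)) :
    covers B H E ↔ (∀ a ∈ E.epos, a ∈ M) ∧ ∀ a ∈ E.eneg, a ∉ M := by
  simp only [covers, entails_iff_of_isStratified hP hM]

/-- The body of `r` fails in `M`, so `r` contributes nothing to the reduct that `M` relies on. -/
lemma isStable.of_subset_of_not_ruleActive {P P' : Set (Rule α)} {r : Rule α} {M : Set α}
    (hsub : P' ⊆ P) (hsup : P ⊆ insert r P') (hM : isStable M P)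
    (hinact : ¬ ruleActive M r) : isStable M P' := by
  have hmodel : isModel M (reduct P' M) := by
    rintro _ ⟨q, hq, hneg, rfl⟩
    exact hM.1 _ ⟨q, hsub hq, hneg, rfl⟩
  refine ⟨hmodel, fun M' hM' => ?_⟩
  have hinter : isModel (M ∩ M') (reduct P M) := by
    rintro _ ⟨q, hq, hneg, rfl⟩ ⟨hpos, -⟩
    have hposM : (↑q.pos : Set α) ⊆ M := fun b hb => (hpos hb).1
    rcases hsup hq with rfl | hq'
    · exact absurd ⟨hposM, hneg, hM.head_mem (r := q) hq hposM hneg⟩ hinact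
    · exact ⟨hM.head_mem (r := q) hq hposM hneg,
        hM' _ ⟨q, hq', hneg, rfl⟩ ⟨fun b hb => (hpos hb).2, by simp⟩⟩
  exact fun a ha => (hM.2 _ hinter ha).2

lemma union_coe_erase_subset [DecidableEq α] (Q : Set (Rule α)) (H : Finset (Rule α))
    (r : Rule α) :
    Q ∪ ↑(H.erase r) ⊆ Q ∪ ↑H :=
  Set.union_subset_union_right _ (Finset.coe_subset.2 (H.erase_subset r))

lemma isStable.union_erase [DecidableEq α] {Q : Set (Rule α)} {H : Finset (Rule α)}
    {r : Rule α} {M : Set α} (hM : isStable M (Q ∪ ↑H)) (hinact : ¬ ruleActive M r) :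
    isStable M (Q ∪ ↑(H.erase r)) := by
  refine hM.of_subset_of_not_ruleActive (union_coe_erase_subset Q H r) ?_ hinact
  intro q hq
  by_cases hqr : q = r
  · exact Or.inl hqr
  · simp only [Set.mem_union, Finset.mem_coe] at hq
    simp only [Set.mem_insert_iff, Set.mem_union, Finset.coe_erase, Set.mem_sdiff,
      Set.mem_singleton_iff]
    tauto

lemma progLT_erase [DecidableEq α] {H : Finset (Rule α)} {r : Rule α} (hr : r ∈ H) :
    progLT (H.erase r) H :=
  ⟨⟨id, Set.injOn_id _, fun _ hq => ⟨Finset.mem_of_mem_erase hq, rfl, subset_rfl, subset_rfl⟩⟩,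
    (Finset.erase_ssubset hr).ne⟩

theorem minimal_solution_rule_active_somewhere_general {α : Type}
    (B L : Set (Rule α)) (Es : List (ILPExample α)) (H : Finset (Rule α))
    (M : Fin Es.length → Set α)
    (hmin : isMinimalSolution B L Es H)
    (hstrat : ∀ i : Fin Es.length, isStratified (B ∪ (Es.get i).obs ∪ ↑H))
    (hstab : ∀ i : Fin Es.length, isStable (M i) (B ∪ (Es.get i).obs ∪ ↑H)) :
    ∀ r ∈ H, ∃ i : Fin Es.length,
      (↑r.pos : Set α) ⊆ M i ∧ (∀ a ∈ r.neg, a ∉ M i) ∧ r.head ∈ M i := by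
  classical
  intro r hr
  by_contra hnone
  have hinact : ∀ i, ¬ ruleActive (M i) r := fun i hi => hnone ⟨i, hi⟩
  have hstab' i := (hstab i).union_erase (hinact i)
  have hstrat' i := (hstrat i).mono (union_coe_erase_subset _ H r)
  have hsol : isSolution B L Es (H.erase r) := by
    refine ⟨(Finset.coe_subset.2 (H.erase_subset r)).trans hmin.1.1, fun E hE => ?_⟩
    obtain ⟨i, rfl⟩ := List.mem_iff_get.mp hE
    rw [covers_iff_of_isStratified (hstrat' i) (hstab' i),
      ← covers_iff_of_isStratified (hstrat i) (hstab i)]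
    exact hmin.1.2 _ (Es.get_mem i)
  exact hmin.2 ⟨_, hsol, progLT_erase hr⟩

/-- If `H` is a minimal solution of the ILP task for distinct
examples `(B, L, Es)` and for every `i` the program `B ∪ O_i ∪ H` is stratified
with unique stable model `M i`, then every rule of `H` is active (body satisfied
and head true) in at least one of the contexts `M i`. -/
theorem minimal_solution_rule_active_somewhere {α : Type}
    (B L : Set (Rule α)) (Es : List (ILPExample α)) (H : Finset (Rule α))
    (M : Fin Es.length → Set α)
    (hmin : isMinimalSolution B L Es H)
    (hstrat : ∀ i : Fin Es.length, isStratified (B ∪ (Es.get i).obs ∪ ↑H))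
    (hstab : ∀ i : Fin Es.length, isStable (M i) (B ∪ (Es.get i).obs ∪ ↑H))
    (huniq : ∀ (i : Fin Es.length) (M' : Set α),
      isStable M' (B ∪ (Es.get i).obs ∪ ↑H) → M' = M i) :
    ∀ r ∈ H, ∃ i : Fin Es.length,
      (↑r.pos : Set α) ⊆ M i ∧ (∀ a ∈ r.neg, a ∉ M i) ∧ r.head ∈ M i :=
  minimal_solution_rule_active_somewhere_general B L Es H M hmin hstrat hstab

end ASP
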